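/- arXiv:1803.06039 — 3 statements merged into one kernel-verified Lean document; each statement's English description precedes it below -/
import Mathlib

section
/- Let σ, σ' ∈ S_N and suppose there exists an index j* with σ(j*) = j* but σ'(j*) ≠ j*. Then there exists Y ∈ 𝔸 (N distinct points in ℝ³) such that V_σ(Y) ≠ V_{σ'}(Y). -/
/-!
Put the points anywhere injectively and then move the point `Y j'` far away. Since `σ` fixes
`j'`, the point `Y j'` appears in `V_σ` only in the term `‖Y j' - Y j'‖ = 0`, so `V_σ` does not
change; but `V_{σ'}` contains the term `‖Y j' - Y (σ' j')‖`, which eventually exceeds the old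
value of `V_σ`.
-/

open Function

theorem Function.Injective.update_of_notMem_range {α β : Type*} [DecidableEq α] {f : α → β}
    (hf : Injective f) (a : α) {b : β} (hb : b ∉ Set.range f) : Injective (update f a b) := by
  intro x y hxy
  by_cases hx : x = a <;> by_cases hy : y = a
  · exact hx.trans hy.symm
  · simp only [hx, update_self, ne_eq, hy, not_false_eq_true, update_of_ne] at hxy
    exact absurd ⟨y, hxy.symm⟩ hb
  · simp only [hx, ne_eq, not_false_eq_true, update_of_ne, hy, update_self] at hxy
    exact absurd ⟨x, hxy⟩ hb
  · exact hf (by simpa [hx, hy] using hxy)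

theorem exists_forall_lt_norm_sub {E ι : Type*} [NormedAddCommGroup E] [NormedSpace ℝ E]
    [Nontrivial E] [Fintype ι] (Y : ι → E) (R : ℝ) : ∃ p : E, ∀ i, R < ‖p - Y i‖ := by
  obtain ⟨p, hp⟩ := NormedSpace.exists_lt_norm ℝ E (R + ∑ i, ‖Y i‖)
  refine ⟨p, fun i => ?_⟩
  have hYi : ‖Y i‖ ≤ ∑ i, ‖Y i‖ :=
    Finset.single_le_sum (f := fun i => ‖Y i‖) (fun i _ => norm_nonneg _) (Finset.mem_univ i)
  linarith [norm_sub_norm_le p (Y i)]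

section displacement

variable {E ι : Type*} [SeminormedAddCommGroup E] [Fintype ι]

/-- The paper's `V_σ(Y)`. -/
def displacement (σ : Equiv.Perm ι) (Y : ι → E) : ℝ := ∑ j, ‖Y j - Y (σ j)‖

theorem norm_sub_le_displacement (σ : Equiv.Perm ι) (Y : ι → E) (j : ι) :
    ‖Y j - Y (σ j)‖ ≤ displacement σ Y :=
  Finset.single_le_sum (f := fun j => ‖Y j - Y (σ j)‖) (fun _ _ => norm_nonneg _)
    (Finset.mem_univ j)

theorem displacement_update_of_apply_eq [DecidableEq ι] {σ : Equiv.Perm ι} {j : ι}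
    (hσ : σ j = j) (Y : ι → E) (p : E) : displacement σ (update Y j p) = displacement σ Y := by
  refine Finset.sum_congr rfl fun i _ => ?_
  by_cases hi : i = j
  · subst hi
    simp [hσ]
  · have hσi : σ i ≠ j := fun h => hi (σ.injective (h.trans hσ.symm))
    simp only [update_of_ne hi, update_of_ne hσi]

end displacement

theorem exists_injective_displacement_ne {E ι : Type*} [NormedAddCommGroup E] [NormedSpace ℝ E]
    [Nontrivial E] [Fintype ι] [DecidableEq ι] {Y : ι → E} (hY : Injective Y)
    {σ σ' : Equiv.Perm ι} {j : ι} (hσ : σ j = j) (hσ' : σ' j ≠ j) :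
    ∃ Y' : ι → E, Injective Y' ∧ displacement σ Y' ≠ displacement σ' Y' := by
  obtain ⟨p, hp⟩ := exists_forall_lt_norm_sub Y (displacement σ Y)
  have hp_range : p ∉ Set.range Y := by
    rintro ⟨i, rfl⟩
    have := hp i
    rw [sub_self, norm_zero] at this
    exact this.not_ge (Finset.sum_nonneg fun _ _ => norm_nonneg _)
  refine ⟨update Y j p, hY.update_of_notMem_range j hp_range, (ne_of_lt ?_)⟩
  calc displacement σ (update Y j p) = displacement σ Y := displacement_update_of_apply_eq hσ Y p
    _ < ‖p - Y (σ' j)‖ := hp (σ' j)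
    _ = ‖update Y j p j - update Y j p (σ' j)‖ := by rw [update_self, update_of_ne hσ']
    _ ≤ displacement σ' (update Y j p) := norm_sub_le_displacement σ' _ j

/-- If σ fixes some index j* while σ' does not, then there is an N-tuple Y of
distinct points in ℝ³ with V_σ(Y) ≠ V_{σ'}(Y). -/
theorem exists_V_ne_of_fixed_point_mismatch (N : ℕ) (σ σ' : Equiv.Perm (Fin N))
    (j' : Fin N) (hσ : σ j' = j') (hσ' : σ' j' ≠ j') :
    ∃ Y : Fin N → EuclideanSpace ℝ (Fin 3), Function.Injective Y ∧
      ∑ j, ‖Y j - Y (σ j)‖ ≠ ∑ j, ‖Y j - Y (σ' j)‖ :=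
  exists_injective_displacement_ne
    ((Infinite.natEmbedding _).injective.comp Fin.val_injective) hσ hσ'
end

section
/- For σ, σ' ∈ S_N: V_σ(Y) = V_{σ'}(Y) holds for all N-tuples Y of distinct points in ℝ³ if and only if σ and σ' are edge-equivalent (the multisets of unordered pairs {{j, σ(j)} : j} and {{j, σ'(j)} : j} coincide). -/
/-!
Both sides only see the edge multiset: `V_σ(Y)` is the sum of the symmetric function
`s(i, j) ↦ |y_i - y_j|` over it, which gives one direction. Conversely, edge counts can be read
off from `V` on collinear configurations: put `a` at `t`, `b` at `0` and every other point at
distance `≥ 2`. For `|t| < 1` the only term of `V_σ` that is not affine in `t` is `|t|`, once for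
each edge `s(a, b)`, so `V(1/2) + V(-1/2) - V(1/4) - V(-1/4)` is half the multiplicity of
`s(a, b)`. Loops contribute nothing, but for a permutation `a` is a fixed point exactly when it
lies on no other edge.
-/

open Finset Function

theorem Function.Injective.update_of_forall_ne {α β : Type*} [DecidableEq α] {f : α → β}
    (hf : Injective f) {a : α} {t : β} (ht : ∀ k, k ≠ a → f k ≠ t) :
    Injective (update f a t) := by
  intro i j h
  rcases eq_or_ne i a with rfl | hi <;> rcases eq_or_ne j i with rfl | hj
  · rfl
  · simp only [update_self, update_of_ne hj] at h
    exact absurd h.symm (ht j hj)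
  · rfl
  · rcases eq_or_ne j a with rfl | hja
    · simp only [update_self, update_of_ne hi] at h
      exact absurd h (ht i hi)
    · rw [update_of_ne hi, update_of_ne hja] at h
      exact hf h

section EdgeMultiset

variable {α : Type*} [Fintype α]

def edgeMultiset (f : α → α) : Multiset (Sym2 α) :=
  univ.val.map fun j => s(j, f j)

theorem sum_eq_sum_of_edgeMultiset_eq {M : Type*} [AddCommMonoid M] {f g : α → α}
    (h : edgeMultiset f = edgeMultiset g) (d : α → α → M) (hd : ∀ i j, d i j = d j i) :
    ∑ j, d j (f j) = ∑ j, d j (g j) := by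
  have sum_eq_sum_map : ∀ f : α → α,
      ∑ j, d j (f j) = ((edgeMultiset f).map (Sym2.lift ⟨d, hd⟩)).sum := fun f => by
    simp only [edgeMultiset, Multiset.map_map]
    rfl
  rw [sum_eq_sum_map f, sum_eq_sum_map g, h]

variable [DecidableEq α]

theorem count_edgeMultiset (f : α → α) (e : Sym2 α) :
    (edgeMultiset f).count e = #{j | s(j, f j) = e} := by
  simp [edgeMultiset, Multiset.count_map, Finset.card, Finset.filter_val, eq_comm]

theorem count_edgeMultiset_diag (f : α → α) (a : α) :
    (edgeMultiset f).count s(a, a) = if f a = a then 1 else 0 := by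
  rw [count_edgeMultiset]
  split_ifs with h <;> simp [Finset.card_eq_one, Finset.eq_singleton_iff_unique_mem, h]

theorem Equiv.Perm.apply_eq_self_iff_forall_ne_count_edgeMultiset_eq_zero (σ : Equiv.Perm α)
    (a : α) :
    σ a = a ↔ ∀ b, a ≠ b → (edgeMultiset σ).count s(a, b) = 0 := by
  simp only [count_edgeMultiset, Finset.card_eq_zero, Finset.filter_eq_empty_iff, mem_univ,
    true_implies, Sym2.eq_iff]
  refine ⟨fun ha b hab j => ?_,
    fun h => by_contra fun ha => @h (σ a) (Ne.symm ha) a (.inl ⟨rfl, rfl⟩)⟩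
  rintro (⟨rfl, rfl⟩ | ⟨rfl, hj⟩)
  · exact hab ha.symm
  · exact hab (σ.injective (ha.trans hj.symm))

theorem Equiv.Perm.edgeMultiset_eq_of_forall_ne_count_eq {σ σ' : Equiv.Perm α}
    (h : ∀ a b, a ≠ b → (edgeMultiset σ).count s(a, b) = (edgeMultiset σ').count s(a, b)) :
    edgeMultiset σ = edgeMultiset σ' := by
  refine Multiset.ext.mpr fun e => ?_
  induction e using Sym2.ind with
  | _ a b =>
    rcases eq_or_ne a b with rfl | hab
    · have hfix : σ a = a ↔ σ' a = a := by
        simp only [Equiv.Perm.apply_eq_self_iff_forall_ne_count_edgeMultiset_eq_zero]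
        exact forall_congr' fun b => forall_congr' fun hab => by rw [h a b hab]
      simp only [count_edgeMultiset_diag, hfix]
    · exact h a b hab

end EdgeMultiset

theorem sum_abs_sub_eq_of_forall_injective_norm {α E : Type*} [Fintype α] [NormedAddCommGroup E]
    [NormedSpace ℝ E] [Nontrivial E] {f g : α → α}
    (H : ∀ Y : α → E, Injective Y → ∑ j, ‖Y j - Y (f j)‖ = ∑ j, ‖Y j - Y (g j)‖)
    {x : α → ℝ} (hx : Injective x) : ∑ j, |x j - x (f j)| = ∑ j, |x j - x (g j)| := by
  obtain ⟨v, hv⟩ := exists_norm_eq E zero_le_one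
  let ι := LinearIsometry.toSpanSingleton ℝ E hv
  simpa [← map_sub, ι.norm_map] using H (ι ∘ x) (ι.injective.comp hx)

section Kink

noncomputable def kink (h : ℝ → ℝ) : ℝ :=
  h (1 / 2) + h (-1 / 2) - h (1 / 4) - h (-1 / 4)

theorem kink_congr {f g : ℝ → ℝ} (h : ∀ t, t ≠ 0 → t < 1 → f t = g t) :
    kink f = kink g := by
  simp only [kink]
  rw [h, h, h, h] <;> norm_num

theorem kink_sum {ι : Type*} (s : Finset ι) (f : ι → ℝ → ℝ) :
    kink (fun t => ∑ i ∈ s, f i t) = ∑ i ∈ s, kink (f i) := by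
  simp only [kink, sum_add_distrib, sum_sub_distrib]

theorem kink_const (c : ℝ) : kink (fun _ => c) = 0 := by
  simp only [kink]; ring

theorem kink_abs : kink (fun t => |t|) = 1 / 2 := by
  norm_num [kink, abs_of_pos, abs_of_neg]

theorem kink_abs_sub_of_one_le {c : ℝ} (hc : 1 ≤ c) : kink (fun t => |t - c|) = 0 := by
  simp only [kink]
  rw [abs_of_neg, abs_of_neg, abs_of_neg, abs_of_neg] <;> linarith

end Kink

section TestConfiguration

variable {N : ℕ}

def spread (b : Fin N) (k : Fin N) : ℝ :=
  if k = b then 0 else (k : ℝ) + 2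

theorem two_le_spread {b k : Fin N} (hk : k ≠ b) : 2 ≤ spread b k := by
  simp [spread, hk]

theorem spread_injective (b : Fin N) : Injective (spread b) := by
  intro i j h
  rcases eq_or_ne i b with rfl | hi <;> rcases eq_or_ne j i with rfl | hj
  · rfl
  · linarith [two_le_spread hj, show spread i i = 0 by simp [spread]]
  · rfl
  · rcases eq_or_ne j b with rfl | hjb
    · linarith [two_le_spread hi, show spread j j = 0 by simp [spread]]
    · simpa [spread, hi, hjb, Fin.val_inj] using h

theorem spread_ne {b k : Fin N} {t : ℝ} (ht0 : t ≠ 0) (ht2 : t < 2) : spread b k ≠ t := by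
  rcases eq_or_ne k b with rfl | hk
  · simpa [spread] using ht0.symm
  · linarith [two_le_spread hk]

theorem kink_abs_sub_spread (b u : Fin N) :
    kink (fun t => |t - spread b u|) = if u = b then 1 / 2 else 0 := by
  split_ifs with hu
  · simpa [spread, hu] using kink_abs
  · exact kink_abs_sub_of_one_le (by linarith [two_le_spread hu])

theorem kink_abs_sub_update_spread {a b : Fin N} (hab : a ≠ b) (j u : Fin N) :
    kink (fun t => |update (spread b) a t j - update (spread b) a t u|) =
      if s(j, u) = s(a, b) then 1 / 2 else 0 := by
  by_cases hj : j = a <;> by_cases hu : u = a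
  · simp [hj, hu, kink_const, hab]
  · simp only [hj, update_self, update_of_ne hu, kink_abs_sub_spread, Sym2.congr_right]
  · rw [Sym2.eq_swap, hu]
    simp only [Sym2.congr_right, update_self, update_of_ne hj, abs_sub_comm (spread b j),
      kink_abs_sub_spread]
  · simp [kink_const, hj, hu]

theorem kink_sum_abs_sub_update_spread {a b : Fin N} (hab : a ≠ b) (f : Fin N → Fin N) :
    kink (fun t => ∑ j, |update (spread b) a t j - update (spread b) a t (f j)|) =
      (edgeMultiset f).count s(a, b) / 2 := by
  rw [kink_sum]
  simp only [kink_abs_sub_update_spread hab, sum_ite, sum_const, count_edgeMultiset, nsmul_eq_mul]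
  ring

end TestConfiguration

theorem count_edgeMultiset_eq_of_forall_injective {N : ℕ} {f g : Fin N → Fin N}
    (H : ∀ x : Fin N → ℝ, Injective x → ∑ j, |x j - x (f j)| = ∑ j, |x j - x (g j)|)
    {a b : Fin N} (hab : a ≠ b) :
    (edgeMultiset f).count s(a, b) = (edgeMultiset g).count s(a, b) := by
  have hkink := kink_congr fun t ht0 ht1 =>
    H (update (spread b) a t)
      ((spread_injective b).update_of_forall_ne fun _ _ => spread_ne ht0 (by linarith))
  rw [kink_sum_abs_sub_update_spread hab, kink_sum_abs_sub_update_spread hab] at hkink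
  exact_mod_cast (div_left_inj' two_ne_zero).mp hkink

/-- V_σ(Y) = V_{σ'}(Y) holds for all N-tuples Y of distinct points in ℝ³ if and
only if σ and σ' are edge-equivalent (their multisets of unordered pairs
{j, σ(j)} coincide). -/
theorem V_eq_forall_iff_edgeEquiv (N : ℕ) (σ σ' : Equiv.Perm (Fin N)) :
    (∀ Y : Fin N → EuclideanSpace ℝ (Fin 3), Function.Injective Y →
        ∑ j, ‖Y j - Y (σ j)‖ = ∑ j, ‖Y j - Y (σ' j)‖) ↔
      (Finset.univ.val.map fun j : Fin N => s(j, σ j)) =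
        (Finset.univ.val.map fun j : Fin N => s(j, σ' j)) := by
  change _ ↔ edgeMultiset σ = edgeMultiset σ'
  constructor
  · intro H
    exact Equiv.Perm.edgeMultiset_eq_of_forall_ne_count_eq fun a b hab =>
      count_edgeMultiset_eq_of_forall_injective
        (fun x hx => sum_abs_sub_eq_of_forall_injective_norm H hx) hab
  · intro h Y _
    exact sum_eq_sum_of_edgeMultiset_eq h (fun i j => ‖Y i - Y j‖) fun i j => norm_sub_rev _ _
end

section
/- There exists a subset 𝔸₁ of 𝔸 = {N-tuples of distinct points in ℝ³}, open and dense in 𝔸, such that for every Y ∈ 𝔸₁ and all σ, σ' ∈ S_N: V_σ(Y) = V_{σ'}(Y) implies σ and σ' are edge-equivalent. -/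
/-!
Moving the single point `Y j` to `x` turns `V_σ - V_σ'` into
`∑ₘ (c_σ(j, m) - c_σ'(j, m)) ‖x - Y m‖ + const`, where `c_σ(j, m)` is the multiplicity of the
edge `{j, m}`. This function is real-analytic off the finitely many points `Y m`, whose complement
in `ℝ³` is connected; so if it were constant near `Y j` it would be constant everywhere, which is
impossible near a point `Y k` with nonzero coefficient, where `‖x - Y k‖` has a corner. Hence
`V_σ ≠ V_σ'` on an open dense set whenever `σ` and `σ'` differ in the multiplicity of some proper
edge, and `𝔸₁` is the finite intersection of these sets. Loops `{a, a}` have length zero, but they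
are determined by the proper edges: `a` is fixed exactly when no proper edge meets it.
-/

open Filter Topology Function Finset

section Edges

variable {ι : Type*} [Fintype ι] [DecidableEq ι]

def permEdges (σ : Equiv.Perm ι) : Multiset (Sym2 ι) :=
  univ.val.map fun i => s(i, σ i)

theorem count_permEdges (σ : Equiv.Perm ι) (e : Sym2 ι) :
    (permEdges σ).count e = #{i | e = s(i, σ i)} :=
  Multiset.count_map _ _ _

theorem count_permEdges_of_ne (σ : Equiv.Perm ι) {a b : ι} (hab : a ≠ b) :
    (permEdges σ).count s(a, b) = (if σ a = b then 1 else 0) + (if σ b = a then 1 else 0) := by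
  have : filter (fun i => s(a, b) = s(i, σ i)) univ =
      filter (fun i => σ i = b) {a} ∪ filter (fun i => σ i = a) {b} := by
    ext i
    simp only [mem_filter, mem_univ, true_and, Sym2.eq_iff, mem_union, mem_singleton]
    aesop
  rw [count_permEdges, this, card_union_of_disjoint, filter_singleton, filter_singleton]
  · split_ifs <;> simp
  · exact disjoint_filter_filter (disjoint_singleton.2 hab)

theorem count_permEdges_diag (σ : Equiv.Perm ι) (a : ι) :
    (permEdges σ).count s(a, a) = if σ a = a then 1 else 0 := by
  have : filter (fun i => s(a, a) = s(i, σ i)) univ = filter (fun i => σ i = a) {a} := by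
    ext i
    simp only [mem_filter, mem_univ, true_and, Sym2.eq_iff, mem_singleton]
    constructor
    · rintro (⟨rfl, h⟩ | ⟨h, rfl⟩) <;> exact ⟨rfl, h.symm⟩
    · rintro ⟨rfl, h⟩
      exact Or.inl ⟨rfl, h.symm⟩
  rw [count_permEdges, this, filter_singleton]
  split_ifs <;> simp

theorem apply_eq_self_iff_forall_count_permEdges_eq_zero (σ : Equiv.Perm ι) (a : ι) :
    σ a = a ↔ ∀ b, a ≠ b → (permEdges σ).count s(a, b) = 0 := by
  constructor
  · intro h b hab
    rw [count_permEdges_of_ne σ hab, h, if_neg hab,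
      if_neg fun hb => hab (σ.injective (hb.trans h.symm)).symm]
  · intro h
    by_contra hne
    have := h (σ a) (Ne.symm hne)
    rw [count_permEdges_of_ne σ (Ne.symm hne)] at this
    simp at this

theorem permEdges_eq_of_count_offDiag_eq {σ τ : Equiv.Perm ι}
    (h : ∀ a b, a ≠ b → (permEdges σ).count s(a, b) = (permEdges τ).count s(a, b)) :
    permEdges σ = permEdges τ := by
  ext e
  induction e using Sym2.inductionOn with
  | hf a b =>
    rcases eq_or_ne a b with rfl | hab
    · have : σ a = a ↔ τ a = a := by
        simp only [apply_eq_self_iff_forall_count_permEdges_eq_zero]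
        exact forall_congr' fun b => imp_congr_right fun hab => by rw [h a b hab]
      simp only [count_permEdges_diag, this]
    · exact h a b hab

end Edges

section Length

variable {ι : Type*} [Fintype ι] {E : Type*} [SeminormedAddCommGroup E]

def permLength (Y : ι → E) (σ : Equiv.Perm ι) : ℝ :=
  ∑ i, ‖Y i - Y (σ i)‖

theorem continuous_permLength (σ : Equiv.Perm ι) :
    Continuous fun Y : ι → E => permLength Y σ := by
  unfold permLength
  fun_prop

variable [DecidableEq ι]

theorem norm_update_sub_update (Y : ι → E) (j : ι) (x : E) (a b : ι) :
    ‖update Y j x a - update Y j x b‖ =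
      ∑ m ∈ univ.erase j, (if s(j, m) = s(a, b) then ‖x - Y m‖ else 0) +
        if j ∈ s(a, b) then 0 else ‖Y a - Y b‖ := by
  by_cases ha : a = j <;> by_cases hb : b = j
  · subst ha hb
    simp
  · subst ha
    simp only [Sym2.congr_right, sum_ite_eq', mem_erase]
    simp [hb]
  · subst hb
    simp only [Sym2.eq_swap (b := b), Sym2.congr_right, sum_ite_eq', mem_erase]
    simp [ha, norm_sub_rev]
  · have hj : j ∉ s(a, b) := by simp [Ne.symm ha, Ne.symm hb]
    have : ∀ m, s(j, m) ≠ s(a, b) := fun m h => hj (h ▸ Sym2.mem_mk_left j m)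
    simp [ha, hb, hj, this]

theorem permLength_update (Y : ι → E) (σ : Equiv.Perm ι) (j : ι) :
    ∃ C, ∀ x, permLength (update Y j x) σ =
      ∑ m ∈ univ.erase j, ((permEdges σ).count s(j, m) : ℝ) * ‖x - Y m‖ + C := by
  refine ⟨∑ i, if j ∈ s(i, σ i) then 0 else ‖Y i - Y (σ i)‖, fun x => ?_⟩
  simp only [permLength, norm_update_sub_update, sum_add_distrib, count_permEdges]
  rw [sum_comm]
  congr 1
  refine sum_congr rfl fun m _ => ?_
  rw [← sum_filter, sum_const, nsmul_eq_mul]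

end Length

section Analytic

variable {E : Type*} [NormedAddCommGroup E] [InnerProductSpace ℝ E]

theorem analyticAt_norm {x : E} (hx : x ≠ 0) : AnalyticAt ℝ (‖·‖) x := by
  have hsq : AnalyticAt ℝ (fun y : E => ‖y‖ ^ 2) x := by
    simp_rw [← real_inner_self_eq_norm_sq]
    exact (innerSL ℝ).analyticAt_bilinear (x, x) |>.comp (f := fun y => (y, y))
      (analyticAt_id.prod analyticAt_id)
  have hexp : AnalyticAt ℝ (fun y : E => Real.exp (Real.log (‖y‖ ^ 2) / 2)) x :=
    analyticAt_rexp.comp (((analyticAt_log (by positivity)).comp hsq).div_const)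
  refine hexp.congr (eventually_ne_nhds hx |>.mono fun y hy => ?_)
  dsimp only
  rw [Real.log_pow, Nat.cast_ofNat, mul_div_cancel_left₀ _ two_ne_zero,
    Real.exp_log (norm_pos_iff.2 hy)]

theorem analyticAt_norm_sub {x p : E} (hx : x ≠ p) : AnalyticAt ℝ (fun y => ‖y - p‖) x :=
  (analyticAt_norm (sub_ne_zero.2 hx)).comp (f := fun y => y - p) (by fun_prop)

theorem not_differentiableAt_norm_sub [Nontrivial E] (p : E) :
    ¬ DifferentiableAt ℝ (fun y => ‖y - p‖) p := by
  rw [differentiableAt_comp_sub (f := (‖·‖)), sub_self]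
  exact not_differentiableAt_norm_zero E

theorem analyticAt_sum_mul_norm_sub {ι : Type*} {s : Finset ι} {p : ι → E} (a : ι → ℝ) {x : E}
    (hx : ∀ m ∈ s, x ≠ p m) : AnalyticAt ℝ (fun y => ∑ m ∈ s, a m * ‖y - p m‖) x :=
  Finset.analyticAt_fun_sum _ fun m hm => analyticAt_const.mul (analyticAt_norm_sub (hx m hm))

theorem eq_zero_of_sum_mul_norm_sub_eventuallyEq_const (hE : 1 < Module.rank ℝ E) {ι : Type*}
    {s : Finset ι} {p : ι → E} (hp : Set.InjOn p s) {a : ι → ℝ} {x₀ : E} (hx₀ : x₀ ∉ p '' s)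
    {c : ℝ} (h : (fun x => ∑ m ∈ s, a m * ‖x - p m‖) =ᶠ[𝓝 x₀] fun _ => c) {k : ι} (hk : k ∈ s) :
    a k = 0 := by
  classical
  have : Nontrivial E := rank_pos_iff_nontrivial.1 (zero_lt_one.trans hE)
  have hfin : (p '' s).Countable := (s.finite_toSet.image p).countable
  have hana : AnalyticOnNhd ℝ (fun x => ∑ m ∈ s, a m * ‖x - p m‖) (p '' s)ᶜ :=
    fun x hx => analyticAt_sum_mul_norm_sub a fun m hm hxm => hx ⟨m, hm, hxm.symm⟩
  have hoff : Set.EqOn (fun x => ∑ m ∈ s, a m * ‖x - p m‖) (fun _ => c) (p '' s)ᶜ :=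
    hana.eqOn_of_preconnected_of_eventuallyEq analyticOnNhd_const
      (hfin.isConnected_compl_of_one_lt_rank hE).isPreconnected hx₀ h
  have hconst : (fun x => ∑ m ∈ s, a m * ‖x - p m‖) = fun _ => c :=
    Continuous.ext_on (hfin.dense_compl ℝ) (by fun_prop) continuous_const hoff
  have hsplit : (fun x => a k * ‖x - p k‖) = fun x => c - ∑ m ∈ s.erase k, a m * ‖x - p m‖ := by
    funext x
    rw [← congrFun hconst x, ← add_sum_erase s _ hk, add_sub_cancel_right]
  have hdiff : DifferentiableAt ℝ (fun x => a k * ‖x - p k‖) (p k) := by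
    rw [hsplit]
    refine (analyticAt_sum_mul_norm_sub a fun m hm => ?_).differentiableAt.const_sub c
    exact fun h => (mem_erase.1 hm).1 (hp (mem_erase.1 hm).2 hk h.symm)
  by_contra hak
  refine not_differentiableAt_norm_sub (p k) ?_
  simpa [← mul_assoc, inv_mul_cancel₀ hak] using hdiff.const_mul (a k)⁻¹

end Analytic

theorem isOpen_setOf_injective {ι X : Type*} [Finite ι] [TopologicalSpace X] [T2Space X] :
    IsOpen {Y : ι → X | Injective Y} := by
  have : {Y : ι → X | Injective Y} = ⋂ (a) (b) (_ : a ≠ b), {Y | Y a ≠ Y b} := by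
    ext Y
    simp only [Set.mem_ofPred_eq, Set.mem_iInter, Injective]
    exact ⟨fun h a b hab hY => hab (h hY), fun h a b hY => by_contra fun hab => h a b hab hY⟩
  rw [this]
  exact isOpen_iInter_of_finite fun a => isOpen_iInter_of_finite fun b =>
    isOpen_iInter_of_finite fun _ => isOpen_ne_fun (continuous_apply a) (continuous_apply b)

section Generic

variable {ι : Type*} [Fintype ι] [DecidableEq ι] {E : Type*} [NormedAddCommGroup E]
  [InnerProductSpace ℝ E]

theorem frequently_permLength_ne (hE : 1 < Module.rank ℝ E) {Y₀ : ι → E} (hY₀ : Injective Y₀)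
    {σ τ : Equiv.Perm ι} (h : permEdges σ ≠ permEdges τ) :
    ∃ᶠ Y in 𝓝 Y₀, permLength Y σ ≠ permLength Y τ := by
  obtain ⟨j, k, hjk, hcount⟩ : ∃ j k, j ≠ k ∧
      (permEdges σ).count s(j, k) ≠ (permEdges τ).count s(j, k) := by
    by_contra! hcon
    exact h (permEdges_eq_of_count_offDiag_eq hcon)
  intro hequal
  have hupd : Tendsto (update Y₀ j) (𝓝 (Y₀ j)) (𝓝 Y₀) := by
    simpa using ((continuous_const (y := Y₀)).update j continuous_id).tendsto (Y₀ j)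
  obtain ⟨C, hC⟩ := permLength_update Y₀ σ j
  obtain ⟨C', hC'⟩ := permLength_update Y₀ τ j
  have hloc : (fun x => ∑ m ∈ univ.erase j,
      (((permEdges σ).count s(j, m) : ℝ) - (permEdges τ).count s(j, m)) * ‖x - Y₀ m‖)
        =ᶠ[𝓝 (Y₀ j)] fun _ => C' - C := by
    filter_upwards [hupd.eventually (hequal.mono fun Y hY => not_not.1 hY)] with x hx
    simp only [sub_mul, sum_sub_distrib]
    linarith [hC x, hC' x]
  have := eq_zero_of_sum_mul_norm_sub_eventuallyEq_const hE hY₀.injOn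
    (fun ⟨m, hm, hmj⟩ => (mem_erase.1 hm).1 (hY₀ hmj)) hloc (mem_erase.2 ⟨hjk.symm, mem_univ k⟩)
  exact hcount (by exact_mod_cast sub_eq_zero.1 this)

theorem dense_setOf_permLength_ne (hE : 1 < Module.rank ℝ E) {σ τ : Equiv.Perm ι}
    (h : permEdges σ ≠ permEdges τ) :
    Dense {Y : {Y : ι → E // Injective Y} | permLength Y.1 σ ≠ permLength Y.1 τ} := by
  intro Y
  rw [mem_closure_iff_frequently, nhds_induced, frequently_comap]
  refine ((frequently_permLength_ne hE Y.2 h).and_eventually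
    (isOpen_setOf_injective.mem_nhds Y.2)).mono ?_
  rintro Z ⟨hne, hinj⟩
  exact ⟨⟨Z, hinj⟩, rfl, hne⟩

end Generic

/-- There is a subset 𝔸₁ of 𝔸 = {N-tuples of distinct points in ℝ³}, open and dense
in 𝔸, such that for every Y ∈ 𝔸₁, permutations σ, σ' with V_σ(Y) = V_{σ'}(Y) are
edge-equivalent. -/
theorem exists_open_dense_generic_set (N : ℕ) :
    ∃ A₁ : Set (Fin N → EuclideanSpace ℝ (Fin 3)),
      A₁ ⊆ {Y | Function.Injective Y} ∧
      IsOpen ((Subtype.val ⁻¹' A₁ :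
        Set {Y : Fin N → EuclideanSpace ℝ (Fin 3) // Function.Injective Y})) ∧
      Dense ((Subtype.val ⁻¹' A₁ :
        Set {Y : Fin N → EuclideanSpace ℝ (Fin 3) // Function.Injective Y})) ∧
      ∀ Y ∈ A₁, ∀ σ σ' : Equiv.Perm (Fin N),
        (∑ j, ‖Y j - Y (σ j)‖ = ∑ j, ‖Y j - Y (σ' j)‖) →
          (Finset.univ.val.map fun j : Fin N => s(j, σ j)) =
            (Finset.univ.val.map fun j : Fin N => s(j, σ' j)) := by
  have hE : 1 < Module.rank ℝ (EuclideanSpace ℝ (Fin 3)) := by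
    rw [← Module.finrank_eq_rank, finrank_euclideanSpace_fin]
    norm_num
  let P := {p : Equiv.Perm (Fin N) × Equiv.Perm (Fin N) // permEdges p.1 ≠ permEdges p.2}
  let T : P → Set {Y : Fin N → EuclideanSpace ℝ (Fin 3) // Injective Y} :=
    fun p => {Y | permLength Y.1 p.1.1 ≠ permLength Y.1 p.1.2}
  have hopen : ∀ p, IsOpen (T p) := fun p =>
    isOpen_ne_fun ((continuous_permLength _).comp continuous_subtype_val)
      ((continuous_permLength _).comp continuous_subtype_val)
  refine ⟨Subtype.val '' ⋂ p, T p, fun Y ⟨Z, _, hZ⟩ => hZ ▸ Z.2, ?_, ?_, ?_⟩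
  · rw [Subtype.val_injective.preimage_image]
    exact isOpen_iInter_of_finite hopen
  · rw [Subtype.val_injective.preimage_image, ← Set.sInter_range]
    exact (Set.finite_range T).dense_sInter (Set.forall_mem_range.2 hopen)
      (Set.forall_mem_range.2 fun p => dense_setOf_permLength_ne hE p.2)
  · rintro _ ⟨Z, hZ, rfl⟩ σ σ' hV
    by_contra hne
    exact Set.mem_iInter.1 hZ ⟨(σ, σ'), hne⟩ hV
end
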